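/- For any weighted graph G=(V,E,μ,w), the Cheeger k-constant bounds the k-th min-max eigenvalue of the 1-Laplacian from above: h_k(G) ≥ inf over origin-symmetric compact S⊆ℝ^V with γ(S) ≥ k of sup_{x∈S} Φ₁(x), where γ is the Krasnoselskii genus and Φ₁ is the L¹-Rayleigh quotient. Concretely: for every subpartition (A₁,…,A_k) of V, the set S = span(𝟙_{A₁},…,𝟙_{A_k}) ∩ 𝕊^{n-1} is origin-symmetric compact with γ(S) = k, and sup_{x∈S} Φ₁(x) = max_{1≤i≤k} φ(A_i). -/

import Mathlib

open Finset

variable {V : Type*}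

noncomputable def bdryW [Fintype V] [DecidableEq V] (G : SimpleGraph V) [DecidableRel G.Adj]
    (w : Sym2 V → ℝ) (A : Finset V) : ℝ :=
  ∑ u ∈ A, ∑ v ∈ Aᶜ, if G.Adj u v then w s(u, v) else 0

noncomputable def vol [Fintype V] (μ : V → ℝ) (A : Finset V) : ℝ := ∑ v ∈ A, μ v

noncomputable def phi [Fintype V] [DecidableEq V] (G : SimpleGraph V) [DecidableRel G.Adj]
    (μ : V → ℝ) (w : Sym2 V → ℝ) (A : Finset V) : ℝ := bdryW G w A / vol μ A

/-- A subpartition: a tuple of pairwise disjoint nonempty subsets of the vertex set. -/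
def IsSubpartition {k : ℕ} (A : Fin k → Finset V) : Prop :=
  (∀ i, (A i).Nonempty) ∧ ∀ i j, i ≠ j → Disjoint (A i) (A j)

/-- The Cheeger k-constant: min over subpartitions with k parts of the max expansion. -/
noncomputable def hkConst [Fintype V] [DecidableEq V] (G : SimpleGraph V) [DecidableRel G.Adj]
    (μ : V → ℝ) (w : Sym2 V → ℝ) (k : ℕ) : ℝ :=
  sInf {r | ∃ A : Fin k → Finset V, IsSubpartition A ∧
    r = sSup {s | ∃ i, s = phi G μ w (A i)}}

/-- Variant of the Cheeger k-constant where the maximum runs over all unions of parts. -/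
noncomputable def hkUnion [Fintype V] [DecidableEq V] (G : SimpleGraph V) [DecidableRel G.Adj]
    (μ : V → ℝ) (w : Sym2 V → ℝ) (k : ℕ) : ℝ :=
  sInf {r | ∃ A : Fin k → Finset V, IsSubpartition A ∧
    r = sSup {s | ∃ I : Finset (Fin k), I.Nonempty ∧ s = phi G μ w (I.biUnion A)}}

/-- The k-th max-min Cheeger constant ℓ_k. -/
noncomputable def ellk [Fintype V] [DecidableEq V] (G : SimpleGraph V) [DecidableRel G.Adj]
    (μ : V → ℝ) (w : Sym2 V → ℝ) (k : ℕ) : ℝ :=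
  sSup {r | ∃ A : Fin (Fintype.card V - k + 1) → Finset V, IsSubpartition A ∧
    r = sInf {s | ∃ I : Finset (Fin (Fintype.card V - k + 1)), I.Nonempty ∧
      s = phi G μ w (I.biUnion A)}}

/-- The Cheeger constant of a subset A: min of φ over nonempty subsets of A. -/
noncomputable def cheegerConst [Fintype V] [DecidableEq V] (G : SimpleGraph V) [DecidableRel G.Adj]
    (μ : V → ℝ) (w : Sym2 V → ℝ) (A : Finset V) : ℝ :=
  sInf {r | ∃ B : Finset V, B ⊆ A ∧ B.Nonempty ∧ r = phi G μ w B}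

/-- The k-th Dirichlet Cheeger constant ℓ̲_k. -/
noncomputable def ellUnder [Fintype V] [DecidableEq V] (G : SimpleGraph V) [DecidableRel G.Adj]
    (μ : V → ℝ) (w : Sym2 V → ℝ) (k : ℕ) : ℝ :=
  sSup {r | ∃ A : Finset V, A.card = Fintype.card V - k + 1 ∧ r = cheegerConst G μ w A}

/-- The L¹-Rayleigh quotient Φ₁. -/
noncomputable def Phi1 [Fintype V] [DecidableEq V] (G : SimpleGraph V) [DecidableRel G.Adj]
    (μ : V → ℝ) (w : Sym2 V → ℝ) (x : V → ℝ) : ℝ :=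
  ((∑ u, ∑ v, if G.Adj u v then w s(u, v) * |x u - x v| else 0) / 2) / (∑ v, μ v * |x v|)

/-- The indicator vector of a finite set of vertices. -/
def indVec [DecidableEq V] (A : Finset V) : V → ℝ := fun v => if v ∈ A then 1 else 0

/-- The Krasnoselskii genus: the least `m` such that there exists an odd continuous map
from `S` into `ℝᵐ \ {0}`. -/
noncomputable def genus [Fintype V] (S : Set (V → ℝ)) : ℕ :=
  sInf {m : ℕ | ∃ f : S → (Fin m → ℝ), Continuous f ∧ (∀ x, f x ≠ 0) ∧
    ∀ (x : V → ℝ) (hx : x ∈ S) (hx' : -x ∈ S), f ⟨-x, hx'⟩ = - f ⟨x, hx⟩}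

/-- The k-th min-max eigenvalue of the graph 1-Laplacian (with index = Krasnoselskii genus). -/
noncomputable def lambdak [Fintype V] [DecidableEq V] (G : SimpleGraph V) [DecidableRel G.Adj]
    (μ : V → ℝ) (w : Sym2 V → ℝ) (k : ℕ) : ℝ :=
  sInf {r | ∃ S : Set (V → ℝ), IsCompact S ∧ (∀ x ∈ S, -x ∈ S) ∧ k ≤ genus S ∧
    r = sSup (Phi1 G μ w '' S)}

/-!
For a subpartition `A` the map `t ↦ ∑ tᵢ 𝟙_{Aᵢ}` is linear and injective, and `Φ₁` is at most
`maxᵢ φ(Aᵢ)` on its range: the numerator of `Φ₁` is a seminorm, hence at most `∑ |tᵢ| w(∂Aᵢ)`,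
while on disjoint supports the denominator is exactly `∑ |tᵢ| μ(Aᵢ)`.

It remains to find an admissible set of genus `≥ k` inside this range. Instead of computing the
genus of the unit sphere of the span (Borsuk–Ulam), we transport any admissible `S`: if
`f : S → ℝ^(k+p)` realizes its genus, the zero set `B` of the last `p` coordinates of `f` has
genus `≥ k`, since `γ(S) ≤ γ(B) + p` (extend an odd map on `B` by Tietze and symmetrize). The
first `k` coordinates map `B` oddly into `ℝᵏ ∖ 0`, and the image of that under the linear map is
the required set. If no admissible set exists at all, `λ_k` is `sInf ∅ = 0`.
-/

section OddMaps

variable {X β : Type*}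

def OddOn [Neg X] [Neg β] {S : Set X} (f : S → β) : Prop :=
  ∀ (x : X) (hx : x ∈ S) (hx' : -x ∈ S), f ⟨-x, hx'⟩ = -f ⟨x, hx⟩

lemma exists_odd_extension [TopologicalSpace X] [NormalSpace X] [InvolutiveNeg X]
    [ContinuousNeg X] {m : ℕ} {B : Set X} (hB : IsClosed B) (hBneg : ∀ x ∈ B, -x ∈ B)
    {h : B → Fin m → ℝ} (hc : Continuous h) (hodd : OddOn h) :
    ∃ H : X → Fin m → ℝ, Continuous H ∧ (∀ x, H (-x) = -H x) ∧ ∀ z : B, H z = h z := by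
  obtain ⟨H, hH⟩ := ContinuousMap.exists_restrict_eq hB ⟨h, hc⟩
  have hHB (z : B) : H z = h z := DFunLike.congr_fun hH z
  refine ⟨fun x => (2⁻¹ : ℝ) • (H x - H (-x)), by fun_prop, fun x => ?_, fun z => ?_⟩
  · simp only [neg_neg, ← smul_neg, neg_sub]
  · beta_reduce
    rw [hHB z, hHB ⟨-z, hBneg z z.2⟩, hodd z z.2 (hBneg z z.2)]
    module

section ZeroLocus

variable {p : ℕ} {S : Set X}

def zeroLocus (g : S → Fin p → ℝ) : Set X := Subtype.val '' {x | g x = 0}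

variable {g : S → Fin p → ℝ}

lemma zeroLocus_subset : zeroLocus g ⊆ S := by
  rintro _ ⟨x, -, rfl⟩
  exact x.2

lemma apply_inclusion_zeroLocus (z : zeroLocus g) : g (Set.inclusion zeroLocus_subset z) = 0 := by
  obtain ⟨x, hx, hxz⟩ := z.2
  rwa [show Set.inclusion zeroLocus_subset z = x from Subtype.ext hxz.symm]

lemma IsClosed.zeroLocus [TopologicalSpace X] (hS : IsClosed S) (hg : Continuous g) :
    IsClosed (zeroLocus g) :=
  hS.isClosedMap_subtype_val _ (isClosed_eq hg continuous_const)

lemma neg_mem_zeroLocus [InvolutiveNeg X] (hSneg : ∀ x ∈ S, -x ∈ S) (hg : OddOn g) {x : X}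
    (hx : x ∈ zeroLocus g) : -x ∈ zeroLocus g := by
  obtain ⟨⟨x, hxS⟩, hx0, rfl⟩ := hx
  refine ⟨⟨-x, hSneg x hxS⟩, ?_, rfl⟩
  change g _ = 0
  rw [hg x hxS, hx0, neg_zero]

end ZeroLocus

end OddMaps

section Genus

variable {S T : Set (V → ℝ)} {k m p : ℕ}

def AdmitsOddMap (S : Set (V → ℝ)) (m : ℕ) : Prop :=
  ∃ f : S → Fin m → ℝ, Continuous f ∧ (∀ x, f x ≠ 0) ∧ OddOn f

lemma AdmitsOddMap.of_oddOn (hT : AdmitsOddMap T m) {ψ : S → V → ℝ} (hψc : Continuous ψ)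
    (hψT : ∀ z, ψ z ∈ T) (hψ : OddOn ψ) : AdmitsOddMap S m := by
  obtain ⟨f, hf, hf0, hfodd⟩ := hT
  refine ⟨fun z => f ⟨ψ z, hψT z⟩, hf.comp (hψc.subtype_mk _), fun z => hf0 _,
    fun x hx hx' => ?_⟩
  have hmem : -ψ ⟨x, hx⟩ ∈ T := hψ x hx hx' ▸ hψT _
  simp only [hψ x hx hx']
  exact hfodd _ _ hmem

variable [Fintype V]

lemma genus_eq_sInf : genus S = sInf {m | AdmitsOddMap S m} := rfl

lemma genus_le_of_admitsOddMap (h : AdmitsOddMap S m) : genus S ≤ m := Nat.sInf_le h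

lemma genus_eq_zero_of_zero_mem (h0 : (0 : V → ℝ) ∈ S) : genus S = 0 := by
  rw [genus_eq_sInf, Nat.sInf_eq_zero]
  refine Or.inr (Set.eq_empty_of_forall_notMem ?_)
  rintro m ⟨f, -, hf0, hfodd⟩
  apply hf0 ⟨0, h0⟩
  have h0' : -(0 : V → ℝ) ∈ S := by rwa [neg_zero]
  have := hfodd 0 h0 h0'
  simp only [neg_zero] at this
  exact self_eq_neg.mp this

lemma admitsOddMap_card (h0 : (0 : V → ℝ) ∉ S) : AdmitsOddMap S (Fintype.card V) := by
  let e := Fintype.equivFin V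
  refine ⟨fun x i => x.1 (e.symm i), continuous_pi fun i => (continuous_apply _).comp
    continuous_subtype_val, fun x hx => ?_, fun x _ _ => rfl⟩
  have hx0 : x.1 = 0 := funext fun v => by simpa using congrFun hx (e v)
  exact h0 (hx0 ▸ x.2)

lemma admitsOddMap_genus (h0 : (0 : V → ℝ) ∉ S) : AdmitsOddMap S (genus S) :=
  Nat.sInf_mem (s := {m | AdmitsOddMap S m}) ⟨_, admitsOddMap_card h0⟩

lemma genus_le_genus_of_oddOn {ψ : S → V → ℝ} (hψc : Continuous ψ) (hψT : ∀ z, ψ z ∈ T)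
    (hψ : OddOn ψ) (h0 : (0 : V → ℝ) ∉ T) : genus S ≤ genus T :=
  genus_le_of_admitsOddMap ((admitsOddMap_genus h0).of_oddOn hψc hψT hψ)

lemma genus_le_genus_zeroLocus_add (hS : IsClosed S) (hSneg : ∀ x ∈ S, -x ∈ S)
    {g : S → Fin p → ℝ} (hg : Continuous g) (hgodd : OddOn g) :
    genus S ≤ genus (zeroLocus g) + p := by
  by_cases h0 : (0 : V → ℝ) ∈ zeroLocus g
  · simp [genus_eq_zero_of_zero_mem (zeroLocus_subset h0)]
  obtain ⟨h, hc, hne, hodd⟩ := admitsOddMap_genus h0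
  obtain ⟨H, hHc, hHodd, hHh⟩ :=
    exists_odd_extension (hS.zeroLocus hg) (fun _ => neg_mem_zeroLocus hSneg hgodd) hc hodd
  refine genus_le_of_admitsOddMap ⟨fun x => Fin.append (H x) (g x), ?_, fun x hx => ?_,
    fun x hx hx' => ?_⟩
  · exact (Fin.appendHomeomorph _ _).continuous.comp ((hHc.comp continuous_subtype_val).prodMk hg)
  · have hg0 : g x = 0 := funext fun j => by simpa using congrFun hx (Fin.natAdd _ j)
    refine hne ⟨x, x, hg0, rfl⟩ ?_
    rw [← hHh]
    exact funext fun i => by simpa using congrFun hx (Fin.castAdd _ i)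
  · funext i
    refine Fin.addCases (fun i => ?_) (fun j => ?_) i <;> simp [hHodd, hgodd x hx hx']

lemma exists_admitsOddMap_le_genus (hS : IsCompact S) (hSneg : ∀ x ∈ S, -x ∈ S)
    (h0 : (0 : V → ℝ) ∉ S) (hk : k ≤ genus S) :
    ∃ B : Set (V → ℝ), IsCompact B ∧ (∀ x ∈ B, -x ∈ B) ∧ k ≤ genus B ∧ AdmitsOddMap B k := by
  obtain ⟨p, hp⟩ := Nat.exists_eq_add_of_le hk
  obtain ⟨f, hf, hf0, hfodd⟩ : AdmitsOddMap S (k + p) := hp ▸ admitsOddMap_genus h0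
  let g : S → Fin p → ℝ := fun x j => f x (Fin.natAdd k j)
  have hg : Continuous g := continuous_pi fun j => (continuous_apply _).comp hf
  have hgodd : OddOn g := fun x hx hx' => funext fun j => by simp [g, hfodd x hx hx']
  have hsub : zeroLocus g ⊆ S := zeroLocus_subset
  refine ⟨zeroLocus g, hS.of_isClosed_subset (hS.isClosed.zeroLocus hg) hsub,
    fun _ => neg_mem_zeroLocus hSneg hgodd, ?_, ?_⟩
  · have := genus_le_genus_zeroLocus_add hS.isClosed hSneg hg hgodd
    omega
  refine ⟨fun z i => f (Set.inclusion hsub z) (Fin.castAdd p i),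
    continuous_pi fun i => (continuous_apply _).comp (hf.comp (continuous_inclusion hsub)),
    fun z hz => hf0 (Set.inclusion hsub z) ?_, fun x hx hx' => ?_⟩
  · funext i
    exact Fin.addCases (fun i => congrFun hz i)
      (fun j => congrFun (apply_inclusion_zeroLocus z) j) i
  · funext i
    simp [Set.inclusion, hfodd x (hsub hx) (hsub hx')]

lemma exists_subset_range_le_genus {L : (Fin k → ℝ) →ₗ[ℝ] V → ℝ} (hL : Function.Injective L)
    (hS : IsCompact S) (hSneg : ∀ x ∈ S, -x ∈ S) (h0 : (0 : V → ℝ) ∉ S) (hk : k ≤ genus S) :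
    ∃ T ⊆ Set.range L, IsCompact T ∧ (∀ x ∈ T, -x ∈ T) ∧ k ≤ genus T := by
  obtain ⟨B, hB, hBneg, hkB, q, hq, hq0, hqodd⟩ := exists_admitsOddMap_le_genus hS hSneg h0 hk
  have : CompactSpace B := isCompact_iff_compactSpace.mp hB
  have hψ : Continuous (L ∘ q) := L.continuous_of_finiteDimensional.comp hq
  have hψodd : OddOn (L ∘ q) := fun x hx hx' => by simp [hqodd x hx hx']
  refine ⟨Set.range (L ∘ q), Set.range_comp_subset_range _ _, isCompact_range hψ, ?_,
    hkB.trans (genus_le_genus_of_oddOn hψ Set.mem_range_self hψodd ?_)⟩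
  · rintro _ ⟨z, rfl⟩
    exact ⟨⟨-z, hBneg z z.2⟩, hψodd z z.2 _⟩
  · rintro ⟨z, hz⟩
    exact hq0 z (hL (hz.trans L.map_zero.symm))

end Genus

lemma exists_isSubpartition {k : ℕ} [Fintype V] (hk : k ≤ Fintype.card V) :
    ∃ A : Fin k → Finset V, IsSubpartition A := by
  obtain ⟨e⟩ : Nonempty (Fin k ↪ V) := Function.Embedding.nonempty_of_card_le (by simpa using hk)
  exact ⟨fun i => {e i}, fun i => singleton_nonempty _,
    fun i j hij => disjoint_singleton.mpr (e.injective.ne hij)⟩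

section IndicatorSpan

variable [DecidableEq V] {k : ℕ} {A : Fin k → Finset V}

def indComb (A : Fin k → Finset V) : (Fin k → ℝ) →ₗ[ℝ] V → ℝ :=
  Fintype.linearCombination ℝ fun i => indVec (A i)

lemma indComb_eq_sum (t : Fin k → ℝ) : indComb A t = ∑ i, t i • indVec (A i) :=
  Fintype.linearCombination_apply ℝ _ t

lemma indComb_apply (t : Fin k → ℝ) (v : V) : indComb A t v = ∑ i, t i * indVec (A i) v := by
  simp [indComb_eq_sum, Finset.sum_apply]

lemma indComb_apply_of_mem (hA : IsSubpartition A) (t : Fin k → ℝ) {i : Fin k} {v : V}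
    (hv : v ∈ A i) : indComb A t v = t i := by
  rw [indComb_apply, sum_eq_single i]
  · simp [indVec, hv]
  · intro j _ hji
    simp [indVec, disjoint_left.mp (hA.2 i j hji.symm) hv]
  · simp

lemma indComb_apply_of_forall_notMem (t : Fin k → ℝ) {v : V} (hv : ∀ i, v ∉ A i) :
    indComb A t v = 0 := by
  simp [indComb_apply, indVec, hv]

lemma abs_indComb_apply (hA : IsSubpartition A) (t : Fin k → ℝ) (v : V) :
    |indComb A t v| = indComb A |t| v := by
  by_cases hv : ∃ i, v ∈ A i
  · obtain ⟨i, hi⟩ := hv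
    rw [indComb_apply_of_mem hA t hi, indComb_apply_of_mem hA |t| hi, Pi.abs_apply]
  · simp only [not_exists] at hv
    rw [indComb_apply_of_forall_notMem t hv, indComb_apply_of_forall_notMem |t| hv, abs_zero]

lemma indComb_injective (hA : IsSubpartition A) : Function.Injective (indComb A) := by
  intro s t hst
  funext i
  obtain ⟨v, hv⟩ := (hA.1 i)
  simpa [indComb_apply_of_mem hA _ hv] using congrFun hst v

end IndicatorSpan

section Rayleigh

def edgeVar [Fintype V] (G : SimpleGraph V) [DecidableRel G.Adj] (w : Sym2 V → ℝ)
    (x : V → ℝ) : ℝ :=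
  ∑ u, ∑ v, if G.Adj u v then w s(u, v) * |x u - x v| else 0

variable [Fintype V] {G : SimpleGraph V} [DecidableRel G.Adj] {μ : V → ℝ} {w : Sym2 V → ℝ}

lemma edgeVar_nonneg (hw : ∀ e ∈ G.edgeSet, 0 ≤ w e) (x : V → ℝ) : 0 ≤ edgeVar G w x :=
  sum_nonneg fun u _ => sum_nonneg fun v _ => by
    split_ifs with h
    exacts [mul_nonneg (hw _ h) (abs_nonneg _), le_rfl]

lemma edgeVar_add_le (hw : ∀ e ∈ G.edgeSet, 0 ≤ w e) (x y : V → ℝ) :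
    edgeVar G w (x + y) ≤ edgeVar G w x + edgeVar G w y := by
  simp only [edgeVar, ← sum_add_distrib]
  gcongr with u _ v _
  split_ifs with h
  · rw [← mul_add, Pi.add_apply, Pi.add_apply, add_sub_add_comm]
    exact mul_le_mul_of_nonneg_left (abs_add_le _ _) (hw _ h)
  · simp

lemma edgeVar_smul (c : ℝ) (x : V → ℝ) : edgeVar G w (c • x) = |c| * edgeVar G w x := by
  simp only [edgeVar, mul_sum, Pi.smul_apply, smul_eq_mul, ← mul_sub, abs_mul, mul_ite,
    mul_zero, mul_left_comm]

lemma edgeVar_sum_smul_le {ι : Type*} (hw : ∀ e ∈ G.edgeSet, 0 ≤ w e) (s : Finset ι)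
    (t : ι → ℝ) (x : ι → V → ℝ) :
    edgeVar G w (∑ i ∈ s, t i • x i) ≤ ∑ i ∈ s, |t i| * edgeVar G w (x i) := by
  refine (le_sum_of_subadditive (edgeVar G w) ?_ (edgeVar_add_le hw) s _).trans_eq ?_
  · simp [edgeVar]
  · simp only [edgeVar_smul]

lemma vol_pos (hμ : ∀ v, 0 < μ v) {B : Finset V} (hB : B.Nonempty) : 0 < vol μ B :=
  sum_pos (fun v _ => hμ v) hB

variable [DecidableEq V]

lemma Phi1_eq_edgeVar (x : V → ℝ) :
    Phi1 G μ w x = edgeVar G w x / 2 / ∑ v, μ v * |x v| := rfl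

lemma Phi1_nonneg (hμ : ∀ v, 0 ≤ μ v) (hw : ∀ e ∈ G.edgeSet, 0 ≤ w e)
    (x : V → ℝ) : 0 ≤ Phi1 G μ w x :=
  div_nonneg (div_nonneg (edgeVar_nonneg hw x) zero_le_two)
    (sum_nonneg fun v _ => mul_nonneg (hμ v) (abs_nonneg _))

lemma edgeVar_indVec (B : Finset V) : edgeVar G w (indVec B) = 2 * bdryW G w B := by
  let a u v := if u ∈ B ∧ v ∈ Bᶜ ∧ G.Adj u v then w s(u, v) else 0
  have hsplit (u v : V) : (if G.Adj u v then w s(u, v) * |indVec B u - indVec B v| else 0) =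
      a u v + a v u := by
    by_cases hu : u ∈ B <;> by_cases hv : v ∈ B <;> by_cases h : G.Adj u v <;>
      simp [a, indVec, hu, hv, h, G.adj_comm, Sym2.eq_swap]
  have hbdry : bdryW G w B = ∑ u, ∑ v, a u v := by
    simp only [bdryW, a, ite_and, sum_ite_irrel, sum_const_zero, sum_ite_mem, univ_inter]
  rw [edgeVar, hbdry, two_mul]
  simp only [hsplit, sum_add_distrib]
  rw [sum_comm (f := fun u v => a v u)]

variable {k : ℕ} {A : Fin k → Finset V}

lemma sum_mul_abs_indComb (hA : IsSubpartition A) (t : Fin k → ℝ) :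
    ∑ v, μ v * |indComb A t v| = ∑ i, |t i| * vol μ (A i) := by
  simp only [abs_indComb_apply hA]
  simp only [indComb_apply, Pi.abs_apply, mul_sum, vol]
  rw [sum_comm]
  refine sum_congr rfl fun i _ => ?_
  simp [indVec, mul_ite, mul_comm]

lemma phi_nonneg (hμ : ∀ v, 0 ≤ μ v) (hw : ∀ e ∈ G.edgeSet, 0 ≤ w e) (B : Finset V) :
    0 ≤ phi G μ w B :=
  div_nonneg (sum_nonneg fun u _ => sum_nonneg fun v _ => by
      split_ifs with h
      exacts [hw _ h, le_rfl])
    (sum_nonneg fun v _ => hμ v)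

lemma Phi1_indComb_le (hμ : ∀ v, 0 < μ v) (hw : ∀ e ∈ G.edgeSet, 0 ≤ w e)
    (hA : IsSubpartition A) {r : ℝ} (hr : 0 ≤ r) (hAr : ∀ i, phi G μ w (A i) ≤ r)
    (t : Fin k → ℝ) : Phi1 G μ w (indComb A t) ≤ r := by
  have hbdry (i : Fin k) : bdryW G w (A i) ≤ r * vol μ (A i) :=
    (div_le_iff₀ (vol_pos hμ (hA.1 i))).mp (hAr i)
  rw [Phi1_eq_edgeVar, sum_mul_abs_indComb hA]
  refine div_le_of_le_mul₀ (sum_nonneg fun i _ => mul_nonneg (abs_nonneg _)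
    (vol_pos hμ (hA.1 i)).le) hr ?_
  calc edgeVar G w (indComb A t) / 2
      ≤ (∑ i, |t i| * edgeVar G w (indVec (A i))) / 2 := by
        rw [indComb_eq_sum]
        gcongr
        exact edgeVar_sum_smul_le hw _ _ _
    _ = ∑ i, |t i| * bdryW G w (A i) := by
        simp only [edgeVar_indVec, sum_div]
        ring_nf
    _ ≤ ∑ i, |t i| * (r * vol μ (A i)) := by
        gcongr with i
        exact hbdry i
    _ = r * ∑ i, |t i| * vol μ (A i) := by
        rw [mul_sum]
        exact sum_congr rfl fun i _ => by ring

lemma lambdak_le_sSup (hμ : ∀ v, 0 ≤ μ v) (hw : ∀ e ∈ G.edgeSet, 0 ≤ w e)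
    {S : Set (V → ℝ)} (hS : IsCompact S) (hSneg : ∀ x ∈ S, -x ∈ S) (hk : k ≤ genus S) :
    lambdak G μ w k ≤ sSup (Phi1 G μ w '' S) := by
  refine csInf_le ⟨0, ?_⟩ ⟨S, hS, hSneg, hk, rfl⟩
  rintro _ ⟨S, -, -, -, rfl⟩
  exact Real.sSup_nonneg (by rintro _ ⟨x, -, rfl⟩; exact Phi1_nonneg hμ hw x)

lemma lambdak_le_of_forall_Phi1_le (hμ : ∀ v, 0 ≤ μ v) (hw : ∀ e ∈ G.edgeSet, 0 ≤ w e)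
    (hk : 1 ≤ k) {L : (Fin k → ℝ) →ₗ[ℝ] V → ℝ} (hL : Function.Injective L) {r : ℝ}
    (hr : 0 ≤ r) (hLr : ∀ t, Phi1 G μ w (L t) ≤ r) : lambdak G μ w k ≤ r := by
  by_cases hadm : ∃ S : Set (V → ℝ), IsCompact S ∧ (∀ x ∈ S, -x ∈ S) ∧ k ≤ genus S
  · obtain ⟨S, hS, hSneg, hkS⟩ := hadm
    have h0 : (0 : V → ℝ) ∉ S := fun h0 => by
      have := genus_eq_zero_of_zero_mem h0
      omega
    obtain ⟨T, hTL, hT, hTneg, hkT⟩ := exists_subset_range_le_genus hL hS hSneg h0 hkS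
    refine (lambdak_le_sSup hμ hw hT hTneg hkT).trans (Real.sSup_le ?_ hr)
    rintro _ ⟨x, hx, rfl⟩
    obtain ⟨t, rfl⟩ := hTL hx
    exact hLr t
  · convert hr
    rw [lambdak, ← Real.sInf_empty]
    congr 1
    refine Set.eq_empty_of_forall_notMem ?_
    rintro _ ⟨S, hS, hSneg, hkS, -⟩
    exact hadm ⟨S, hS, hSneg, hkS⟩

end Rayleigh

theorem hk_ge_lambdak [Fintype V] [DecidableEq V] (G : SimpleGraph V) [DecidableRel G.Adj]
    (μ : V → ℝ) (w : Sym2 V → ℝ) (hμ : ∀ v, 0 < μ v) (hw : ∀ e ∈ G.edgeSet, 0 < w e)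
    (k : ℕ) (hk : 1 ≤ k) (hkn : k ≤ Fintype.card V) :
    lambdak G μ w k ≤ hkConst G μ w k := by
  have hw' : ∀ e ∈ G.edgeSet, 0 ≤ w e := fun e he => (hw e he).le
  obtain ⟨A₀, hA₀⟩ := exists_isSubpartition hkn
  refine le_csInf ⟨_, A₀, hA₀, rfl⟩ ?_
  rintro _ ⟨A, hA, rfl⟩
  have hbdd : BddAbove {s | ∃ i, s = phi G μ w (A i)} :=
    (Set.finite_range fun i => phi G μ w (A i)).bddAbove.mono <| by
      rintro _ ⟨i, rfl⟩
      exact ⟨i, rfl⟩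
  have hAr (i : Fin k) : phi G μ w (A i) ≤ sSup {s | ∃ i, s = phi G μ w (A i)} :=
    le_csSup hbdd ⟨i, rfl⟩
  have hr := (phi_nonneg (fun v => (hμ v).le) hw' (A ⟨0, hk⟩)).trans (hAr ⟨0, hk⟩)
  exact lambdak_le_of_forall_Phi1_le (fun v => (hμ v).le) hw' hk (indComb_injective hA) hr
    (Phi1_indComb_le hμ hw' hA hr hAr)
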